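/- arXiv:math/0608101 — 5 statements merged into one kernel-verified Lean document; each statement's English description precedes it below -/
import Mathlib

section
/- Let K be a field, m ≥ 1, and let v, g ∈ Mat_m(K) with I_m − v invertible and I_m + g invertible. Then I_m − 𝒞(v)·g = (I_m − v)⁻¹ · (−𝒞⁻¹(g) − v) · (I_m + g), and I_m + 𝒞(v)·g = (I_m − v)⁻¹ · (I_m + v·𝒞⁻¹(g)) · (I_m + g). -/
/-- The Cayley transform `𝒞(y) = (I + y)(I − y)⁻¹` of a square matrix. -/
noncomputable def cayley {m : ℕ} {K : Type*} [Field K]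
    (y : Matrix (Fin m) (Fin m) K) : Matrix (Fin m) (Fin m) K :=
  (1 + y) * (1 - y)⁻¹

/-- The inverse Cayley transform `𝒞⁻¹(t) = (t − I)(t + I)⁻¹`. -/
noncomputable def cayleyInv {m : ℕ} {K : Type*} [Field K]
    (t : Matrix (Fin m) (Fin m) K) : Matrix (Fin m) (Fin m) K :=
  (t - 1) * (t + 1)⁻¹

/-- **CT 1 and CT 2.** For `v, g ∈ Mat_m(K)` with `I − v` and `I + g` invertible:
`I − 𝒞(v)g = (I − v)⁻¹(−𝒞⁻¹(g) − v)(I + g)` and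
`I + 𝒞(v)g = (I − v)⁻¹(I + v𝒞⁻¹(g))(I + g)`. -/
theorem stmt_2 {K : Type*} [Field K] {m : ℕ} (hm : 1 ≤ m)
    (v g : Matrix (Fin m) (Fin m) K)
    (hv : IsUnit (1 - v).det) (hg : IsUnit (1 + g).det) :
    1 - cayley v * g = (1 - v)⁻¹ * (-(cayleyInv g) - v) * (1 + g) ∧
    1 + cayley v * g = (1 - v)⁻¹ * (1 + v * cayleyInv g) * (1 + g) := by
  have hg' : IsUnit (g + 1).det := by rwa [add_comm] at hg
  have hvi : (1 - v)⁻¹ * (1 - v) = 1 := Matrix.nonsing_inv_mul _ hv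
  -- cayley v = (1 - v)⁻¹ * (1 + v)
  have hcomm : (1 + v) * (1 - v)⁻¹ = (1 - v)⁻¹ * (1 + v) := by
    have h1 : (1 - v) * (1 + v) = (1 + v) * (1 - v) := by noncomm_ring
    calc (1 + v) * (1 - v)⁻¹
        = (1 - v)⁻¹ * ((1 - v) * (1 + v)) * (1 - v)⁻¹ := by
          rw [← Matrix.mul_assoc, hvi, Matrix.one_mul]
      _ = (1 - v)⁻¹ * ((1 + v) * ((1 - v) * (1 - v)⁻¹)) := by
          rw [h1]; simp [Matrix.mul_assoc]
      _ = (1 - v)⁻¹ * (1 + v) := by rw [Matrix.mul_nonsing_inv _ hv, Matrix.mul_one]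
  have hcay : cayley v = (1 - v)⁻¹ * (1 + v) := hcomm
  -- cayleyInv g * (1 + g) = g - 1
  have hci : cayleyInv g * (1 + g) = g - 1 := by
    have : (g + 1)⁻¹ * (g + 1) = 1 := Matrix.nonsing_inv_mul _ hg'
    rw [cayleyInv, Matrix.mul_assoc, add_comm 1 g, this, Matrix.mul_one]
  have hc2 : (1 - v) * cayley v = 1 + v := by
    rw [hcay, ← Matrix.mul_assoc, Matrix.mul_nonsing_inv _ hv, Matrix.one_mul]
  constructor
  · calc 1 - cayley v * g
        = (1 - v)⁻¹ * ((1 - v) * (1 - cayley v * g)) := by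
          rw [← Matrix.mul_assoc, hvi, Matrix.one_mul]
      _ = (1 - v)⁻¹ * ((-(cayleyInv g) - v) * (1 + g)) := by
          congr 1
          have h1 : (1 - v) * (1 - cayley v * g) = (1 - v) - (1 + v) * g := by
            rw [Matrix.mul_sub, Matrix.mul_one, ← Matrix.mul_assoc, hc2]
          have h2 : (-(cayleyInv g) - v) * (1 + g)
              = -(cayleyInv g * (1 + g)) - v * (1 + g) := by
            rw [Matrix.sub_mul, Matrix.neg_mul]
          rw [h1, h2, hci]
          noncomm_ring
      _ = (1 - v)⁻¹ * (-(cayleyInv g) - v) * (1 + g) := by rw [Matrix.mul_assoc]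
  · calc 1 + cayley v * g
        = (1 - v)⁻¹ * ((1 - v) * (1 + cayley v * g)) := by
          rw [← Matrix.mul_assoc, hvi, Matrix.one_mul]
      _ = (1 - v)⁻¹ * ((1 + v * cayleyInv g) * (1 + g)) := by
          congr 1
          have h1 : (1 - v) * (1 + cayley v * g) = (1 - v) + (1 + v) * g := by
            rw [Matrix.mul_add, Matrix.mul_one, ← Matrix.mul_assoc, hc2]
          have h2 : (1 + v * cayleyInv g) * (1 + g)
              = (1 + g) + v * (cayleyInv g * (1 + g)) := by
            rw [Matrix.add_mul, Matrix.one_mul, Matrix.mul_assoc]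
          rw [h1, h2, hci]
          noncomm_ring
      _ = (1 - v)⁻¹ * (1 + v * cayleyInv g) * (1 + g) := by rw [Matrix.mul_assoc]
end

section
/- Let K be a field, m ≥ 1, and let v, g ∈ Mat_m(K) with I_m − v invertible and I_m + g invertible. Then I_m + 𝒞(v)·g is invertible if and only if I_m + v·𝒞⁻¹(g) is invertible, and in that case 𝒞⁻¹(𝒞(v)·g) = (I_m − v)⁻¹ · (𝒞⁻¹(g) + v) · (I_m + v·𝒞⁻¹(g))⁻¹ · (I_m − v). -/
private lemma cayley_eq {m : ℕ} {K : Type*} [Field K]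
    (v : Matrix (Fin m) (Fin m) K) (hv : IsUnit (1 - v).det) :
    cayley v = (1 - v)⁻¹ * (1 + v) := by
  haveI := (1 - v).invertibleOfIsUnitDet hv
  have hc : (1 + v) * (1 - v) = (1 - v) * (1 + v) := by noncomm_ring
  unfold cayley
  rw [Matrix.mul_inv_eq_iff_eq_mul_of_invertible, Matrix.mul_assoc, hc,
    Matrix.inv_mul_cancel_left_of_invertible]

/-- **CT 3.** For `v, g ∈ Mat_m(K)` with `I − v` and `I + g` invertible:
`I + 𝒞(v)g` is invertible iff `I + v·𝒞⁻¹(g)` is invertible, and in that case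
`𝒞⁻¹(𝒞(v)g) = (I − v)⁻¹(𝒞⁻¹(g) + v)(I + v𝒞⁻¹(g))⁻¹(I − v)`. -/
theorem stmt_3 {K : Type*} [Field K] {m : ℕ} (hm : 1 ≤ m)
    (v g : Matrix (Fin m) (Fin m) K)
    (hv : IsUnit (1 - v).det) (hg : IsUnit (1 + g).det) :
    (IsUnit (1 + cayley v * g).det ↔ IsUnit (1 + v * cayleyInv g).det) ∧
    (IsUnit (1 + cayley v * g).det →
      cayleyInv (cayley v * g)
        = (1 - v)⁻¹ * (cayleyInv g + v) * (1 + v * cayleyInv g)⁻¹ * (1 - v)) := by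
  haveI := (1 - v).invertibleOfIsUnitDet hv
  haveI := (1 + g).invertibleOfIsUnitDet hg
  set A : Matrix (Fin m) (Fin m) K := (1 - v) + (1 + v) * g with hA
  set B : Matrix (Fin m) (Fin m) K := (1 + v) * g - (1 - v) with hB
  have hg' : (g + 1 : Matrix (Fin m) (Fin m) K) = (1 + g) := by rw [add_comm]
  have hA1 : 1 + cayley v * g = (1 - v)⁻¹ * A := by
    rw [cayley_eq v hv, eq_comm, Matrix.inv_mul_eq_iff_eq_mul_of_invertible,
      Matrix.mul_add, Matrix.mul_one, Matrix.mul_assoc ((1 - v)⁻¹) (1 + v) g,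
      Matrix.mul_inv_cancel_left_of_invertible, hA]
  have hA2 : 1 + v * cayleyInv g = A * (1 + g)⁻¹ := by
    unfold cayleyInv
    rw [hg', eq_comm, Matrix.mul_inv_eq_iff_eq_mul_of_invertible,
      Matrix.add_mul, Matrix.one_mul, Matrix.mul_assoc v ((g - 1) * (1 + g)⁻¹) (1 + g),
      Matrix.mul_assoc (g - 1) ((1 + g)⁻¹) (1 + g), Matrix.inv_mul_of_invertible,
      Matrix.mul_one, hA]
    noncomm_ring
  have hB1 : cayley v * g - 1 = (1 - v)⁻¹ * B := by
    rw [cayley_eq v hv, eq_comm, Matrix.inv_mul_eq_iff_eq_mul_of_invertible,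
      Matrix.mul_sub, Matrix.mul_one, Matrix.mul_assoc ((1 - v)⁻¹) (1 + v) g,
      Matrix.mul_inv_cancel_left_of_invertible, hB]
  have hB2 : cayleyInv g + v = B * (1 + g)⁻¹ := by
    unfold cayleyInv
    rw [hg', eq_comm, Matrix.mul_inv_eq_iff_eq_mul_of_invertible,
      Matrix.add_mul, Matrix.inv_mul_cancel_right_of_invertible, hB]
    noncomm_ring
  have hdet1 : IsUnit (1 + cayley v * g).det ↔ IsUnit A.det := by
    rw [hA1, Matrix.det_mul, IsUnit.mul_iff,
      and_iff_right (Matrix.isUnit_nonsing_inv_det _ hv)]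
  have hdet2 : IsUnit (1 + v * cayleyInv g).det ↔ IsUnit A.det := by
    rw [hA2, Matrix.det_mul, IsUnit.mul_iff,
      and_iff_left (Matrix.isUnit_nonsing_inv_det _ hg)]
  refine ⟨hdet1.trans hdet2.symm, fun hU => ?_⟩
  have hAdet : IsUnit A.det := hdet1.mp hU
  have hLinv : (1 + cayley v * g)⁻¹ = A⁻¹ * (1 - v) := by
    rw [hA1, Matrix.mul_inv_rev, Matrix.nonsing_inv_nonsing_inv _ hv]
  have hRinv : (1 + v * cayleyInv g)⁻¹ = (1 + g) * A⁻¹ := by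
    rw [hA2, Matrix.mul_inv_rev, Matrix.nonsing_inv_nonsing_inv _ hg]
  have hL : cayleyInv (cayley v * g) = (1 - v)⁻¹ * B * (A⁻¹ * (1 - v)) := by
    unfold cayleyInv
    rw [show cayley v * g + 1 = 1 + cayley v * g from add_comm _ _, hLinv, hB1,
      Matrix.mul_assoc]
  rw [hL, hRinv, hB2]
  simp only [Matrix.mul_assoc]
  rw [← Matrix.mul_assoc ((1 + g)⁻¹) (1 + g) _,
    Matrix.nonsing_inv_mul _ hg, Matrix.one_mul]
end

section
/- Let K be a field, m ≥ 1, and let v, g ∈ Mat_m(K) with I_m − v, I_m + v and I_m + g invertible (so 𝒞(v) is invertible, with 𝒞(v)⁻¹ = (I_m − v)(I_m + v)⁻¹). Then I_m − 𝒞(v)⁻¹·g = (I_m + v)⁻¹ · (−𝒞⁻¹(g) + v) · (I_m + g), and I_m + 𝒞(v)⁻¹·g = (I_m + v)⁻¹ · (I_m − v·𝒞⁻¹(g)) · (I_m + g). -/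
/-- **CT 1′ and CT 2′.** For `v, g ∈ Mat_m(K)` with `I − v`, `I + v`, `I + g`
invertible, the matrix `𝒞(v)` is invertible with `𝒞(v)⁻¹ = (I − v)(I + v)⁻¹`, and
`I − 𝒞(v)⁻¹g = (I + v)⁻¹(−𝒞⁻¹(g) + v)(I + g)` and
`I + 𝒞(v)⁻¹g = (I + v)⁻¹(I − v𝒞⁻¹(g))(I + g)`. -/
theorem stmt_4 {K : Type*} [Field K] {m : ℕ} (hm : 1 ≤ m)
    (v g : Matrix (Fin m) (Fin m) K)
    (hv : IsUnit (1 - v).det) (hv' : IsUnit (1 + v).det) (hg : IsUnit (1 + g).det) :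
    IsUnit (cayley v).det ∧
    (cayley v)⁻¹ = (1 - v) * (1 + v)⁻¹ ∧
    1 - (cayley v)⁻¹ * g = (1 + v)⁻¹ * (-(cayleyInv g) + v) * (1 + g) ∧
    1 + (cayley v)⁻¹ * g = (1 + v)⁻¹ * (1 - v * cayleyInv g) * (1 + g) := by
  have hdet : IsUnit (cayley v).det := by
    rw [cayley, Matrix.det_mul, Matrix.det_nonsing_inv, Ring.inverse_eq_inv']
    exact hv'.mul hv.inv
  have hc' : (1 + v) * (1 - v) = (1 - v) * (1 + v) := by noncomm_ring
  have hcomm : (1 - v) * (1 + v)⁻¹ = (1 + v)⁻¹ * (1 - v) := by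
    calc (1 - v) * (1 + v)⁻¹
        = (1 + v)⁻¹ * ((1 + v) * ((1 - v) * (1 + v)⁻¹)) :=
          (Matrix.nonsing_inv_mul_cancel_left _ _ hv').symm
      _ = (1 + v)⁻¹ * ((1 - v) * (1 + v) * (1 + v)⁻¹) := by
          rw [← Matrix.mul_assoc (1 + v), hc']
      _ = (1 + v)⁻¹ * (1 - v) := by
          rw [Matrix.mul_nonsing_inv_cancel_right _ _ hv']
  have hinv : (cayley v)⁻¹ = (1 - v) * (1 + v)⁻¹ := by
    apply Matrix.inv_eq_right_inv
    rw [cayley, Matrix.mul_assoc, ← Matrix.mul_assoc (1 - v)⁻¹,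
      Matrix.nonsing_inv_mul _ hv, Matrix.one_mul, Matrix.mul_nonsing_inv _ hv']
  have hg1 : IsUnit (g + 1).det := by rwa [add_comm]
  have hginv : (g - 1) * (g + 1)⁻¹ * (1 + g) = g - 1 := by
    rw [Matrix.mul_assoc, show (1 + g : Matrix (Fin m) (Fin m) K) = g + 1 from add_comm 1 g,
      Matrix.nonsing_inv_mul _ hg1, Matrix.mul_one]
  refine ⟨hdet, hinv, ?_, ?_⟩
  · rw [hinv, hcomm, cayleyInv]
    have inner : (1 + v) - (1 - v) * g = (-((g - 1) * (g + 1)⁻¹) + v) * (1 + g) := by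
      rw [add_mul, neg_mul, hginv]; noncomm_ring
    calc 1 - (1 + v)⁻¹ * (1 - v) * g
        = (1 + v)⁻¹ * ((1 + v) - (1 - v) * g) := by
          conv_rhs => rw [Matrix.mul_sub, Matrix.nonsing_inv_mul _ hv', ← Matrix.mul_assoc]
      _ = (1 + v)⁻¹ * (-((g - 1) * (g + 1)⁻¹) + v) * (1 + g) := by
          rw [inner, Matrix.mul_assoc]
  · rw [hinv, hcomm, cayleyInv]
    have inner : (1 + v) + (1 - v) * g = (1 - v * ((g - 1) * (g + 1)⁻¹)) * (1 + g) := by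
      conv_rhs => rw [sub_mul, Matrix.one_mul, Matrix.mul_assoc, hginv]
      noncomm_ring
    calc 1 + (1 + v)⁻¹ * (1 - v) * g
        = (1 + v)⁻¹ * ((1 + v) + (1 - v) * g) := by
          conv_rhs => rw [Matrix.mul_add, Matrix.nonsing_inv_mul _ hv', ← Matrix.mul_assoc]
      _ = (1 + v)⁻¹ * (1 - v * ((g - 1) * (g + 1)⁻¹)) * (1 + g) := by
          rw [inner, Matrix.mul_assoc]
end

section
/- Let F be a non-archimedean local field of characteristic zero with ring of integers O_F, maximal ideal P_F, and residue field of cardinality q. Let n, N be positive integers with n ≤ N ≤ 2n, let ψ₀ be a continuous additive character of F trivial on O_F and nontrivial on P_F^{−1}, and let χ be a character of F^× which is trivial on 1 + P_F^N. Then there exists a ∈ P_F^{−N} such that χ(det(I_m − v)) = ψ₀(a·tr(v)) for every m ≥ 1 and every v ∈ Mat_m(F) with ‖v‖ ≤ q^{−n}. -/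
/-!
Entrywise `‖v‖ ≤ q⁻ⁿ` makes every non-identity term of the Leibniz expansion of `det (1 - v)`,
and every higher term of `∏ (1 - vᵢᵢ)`, of norm at most `q⁻²ⁿ ≤ q⁻ᴺ`; so `χ (det (1 - v)) =
χ (1 - tr v)`. For the same reason `t ↦ χ (1 - t)` is additive on `P^n` and trivial on `P^N`,
a character of the finite group `P^n / P^N`. With `c = π^-(N+n)`, the pairing
`(s, t) ↦ ψ₀ (c s t)` identifies `P^n / P^N` with its dual: it is nondegenerate because `ψ₀` is
nontrivial on `P⁻¹`, hence onto by counting, and the resulting `a = c s` lies in `P^-N`.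
-/

open IsUltrametricDist

lemma Matrix.norm_prod_perm_le_of_ne_one {F ι : Type*} [NormedField F] [Fintype ι] [DecidableEq ι]
    (M : Matrix ι ι F) {ε : ℝ} (hM : ∀ i j, ‖M i j‖ ≤ 1) (hoff : ∀ i j, i ≠ j → ‖M i j‖ ≤ ε)
    {σ : Equiv.Perm ι} (hσ : σ ≠ 1) :
    ‖∏ i, M (σ i) i‖ ≤ ε * ε := by
  obtain ⟨x, hx⟩ : ∃ x, σ x ≠ x := by
    by_contra! h
    exact hσ (Equiv.ext h)
  have hσx : σ (σ x) ≠ σ x := fun h => hx (σ.injective h)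
  have hε0 : 0 ≤ ε := (norm_nonneg _).trans (hoff _ _ hx)
  rw [norm_prod, ← Finset.prod_sdiff (Finset.subset_univ {x, σ x}), Finset.prod_pair hx.symm]
  calc (∏ i ∈ Finset.univ \ {x, σ x}, ‖M (σ i) i‖) * (‖M (σ x) x‖ * ‖M (σ (σ x)) (σ x)‖)
      ≤ 1 * (ε * ε) := by
        gcongr
        · exact Finset.prod_le_one (fun _ _ => norm_nonneg _) fun i _ => hM _ _
        · exact hoff _ _ hx
        · exact hoff _ _ hσx
    _ = ε * ε := one_mul _

section Ultrametric

variable {F : Type*} [NormedField F] [IsUltrametricDist F]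

lemma norm_one_sub_eq_one {t : F} (ht : ‖t‖ < 1) : ‖1 - t‖ = 1 := by
  rw [sub_eq_add_neg, norm_add_eq_max_of_norm_ne_norm (by simpa using ht.ne'), norm_one, norm_neg,
    max_eq_left ht.le]

lemma norm_one_sub_le_one {t : F} (ht : ‖t‖ ≤ 1) : ‖1 - t‖ ≤ 1 := by
  simpa [sub_eq_add_neg] using (norm_add_le_max (1 : F) (-t)).trans (max_le le_rfl (by simpa))

lemma norm_prod_one_sub_sub_one_sub_sum_le {ι : Type*} (s : Finset ι) (f : ι → F) {ε : ℝ}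
    (hε0 : 0 ≤ ε) (hε1 : ε ≤ 1) (hf : ∀ i ∈ s, ‖f i‖ ≤ ε) :
    ‖∏ i ∈ s, (1 - f i) - (1 - ∑ i ∈ s, f i)‖ ≤ ε * ε := by
  classical
  induction s using Finset.induction_on with
  | empty => simpa using mul_self_nonneg ε
  | insert a s ha ih =>
    rw [Finset.forall_mem_insert] at hf
    have hS : ‖∑ i ∈ s, f i‖ ≤ ε := norm_sum_le_of_forall_le_of_nonneg hε0 hf.2
    rw [Finset.prod_insert ha, Finset.sum_insert ha]
    calc ‖(1 - f a) * ∏ i ∈ s, (1 - f i) - (1 - (f a + ∑ i ∈ s, f i))‖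
        = ‖(1 - f a) * (∏ i ∈ s, (1 - f i) - (1 - ∑ i ∈ s, f i)) + f a * ∑ i ∈ s, f i‖ := by
          ring_nf
      _ ≤ ε * ε := by
          refine (norm_add_le_max _ _).trans (max_le ?_ ?_) <;> rw [norm_mul]
          · simpa using mul_le_mul (norm_one_sub_le_one (hf.1.trans hε1)) (ih hf.2)
              (norm_nonneg _) zero_le_one
          · exact mul_le_mul hf.1 hS (norm_nonneg _) hε0

variable {ι : Type*} [Fintype ι] [DecidableEq ι]

lemma Matrix.norm_det_sub_prod_diag_le (M : Matrix ι ι F) {ε : ℝ}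
    (hM : ∀ i j, ‖M i j‖ ≤ 1) (hoff : ∀ i j, i ≠ j → ‖M i j‖ ≤ ε) :
    ‖M.det - ∏ i, M i i‖ ≤ ε * ε := by
  rw [Matrix.det_apply, ← Finset.add_sum_erase _ _ (Finset.mem_univ 1)]
  simp only [Equiv.Perm.sign_one, one_smul, Equiv.Perm.one_apply, add_sub_cancel_left]
  refine norm_sum_le_of_forall_le_of_nonneg (mul_self_nonneg ε) fun σ hσ => ?_
  rw [norm_units_zsmul]
  exact M.norm_prod_perm_le_of_ne_one hM hoff (Finset.ne_of_mem_erase hσ)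

lemma Matrix.norm_det_one_sub_sub_one_sub_trace_le (v : Matrix ι ι F) {ε : ℝ} (hε0 : 0 ≤ ε)
    (hε1 : ε ≤ 1) (hv : ∀ i j, ‖v i j‖ ≤ ε) :
    ‖(1 - v).det - (1 - v.trace)‖ ≤ ε * ε := by
  have hsplit : (1 - v).det - (1 - v.trace) =
      ((1 - v).det - ∏ i, (1 - v) i i) + (∏ i, (1 - v i i) - (1 - ∑ i, v i i)) := by
    simp [Matrix.trace]
  rw [hsplit]
  refine (norm_add_le_max _ _).trans (max_le ?_ ?_)
  · refine Matrix.norm_det_sub_prod_diag_le _ (fun i j => ?_) fun i j hij => ?_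
    · rw [Matrix.sub_apply, Matrix.one_apply]
      split_ifs
      · exact norm_one_sub_le_one ((hv i j).trans hε1)
      · simpa using (hv i j).trans hε1
    · simpa [Matrix.one_apply_ne hij] using hv i j
  · exact norm_prod_one_sub_sub_one_sub_sum_le _ _ hε0 hε1 fun i _ => hv i i

end Ultrametric

lemma MonoidHom.map_eq_of_norm_sub_le_mul_norm {F M : Type*} [NormedField F] [Monoid M]
    {χ : Fˣ →* M} {δ : ℝ} (hχ : ∀ u : Fˣ, ‖(u : F) - 1‖ ≤ δ → χ u = 1) {u w : Fˣ}
    (h : ‖(u : F) - w‖ ≤ δ * ‖(w : F)‖) : χ u = χ w := by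
  have hw : 0 < ‖(w : F)‖ := norm_pos_iff.mpr w.ne_zero
  have h1 : χ (w⁻¹ * u) = 1 := by
    refine hχ _ ?_
    rw [Units.val_mul, Units.val_inv_eq_inv_val, ← inv_mul_cancel₀ w.ne_zero, ← mul_sub,
      norm_mul, norm_inv, inv_mul_le_iff₀ hw, mul_comm]
    exact h
  rw [← mul_inv_cancel_left w u, map_mul, h1, mul_one]

lemma exists_addChar_eq_of_norm_sub_le {F M : Type*} [NormedField F] [IsUltrametricDist F]
    [Monoid M] {ε δ : ℝ} (hε : ε < 1) (hεδ : ε * ε ≤ δ) {B : AddSubgroup F}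
    (hB : ∀ x ∈ B, ‖x‖ ≤ ε) (χ : Fˣ →* M) (hχ : ∀ u : Fˣ, ‖(u : F) - 1‖ ≤ δ → χ u = 1) :
    ∃ η : AddChar B M, ∀ (t : B) (u : Fˣ), ‖(u : F) - (1 - t)‖ ≤ δ → η t = χ u := by
  have hunit (t : B) : ‖1 - (t : F)‖ = 1 := norm_one_sub_eq_one ((hB _ t.2).trans_lt hε)
  let U (t : B) : Fˣ := Units.mk0 (1 - t) (norm_ne_zero_iff.mp (by simp [hunit t]))
  have hχU (t : B) (u : Fˣ) (h : ‖(u : F) - (1 - t)‖ ≤ δ) : χ u = χ (U t) :=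
    χ.map_eq_of_norm_sub_le_mul_norm hχ (by simpa [U, hunit t] using h)
  refine ⟨{ toFun := fun t => χ (U t), map_zero_eq_one' := ?_, map_add_eq_mul' := ?_ },
    fun t u h => (hχU t u h).symm⟩
  · simp [U]
  · intro s t
    rw [← map_mul]
    refine (hχU _ _ ?_).symm
    simp only [Units.val_mul, Units.val_mk0, AddSubgroup.coe_add, U]
    calc ‖(1 - (s : F)) * (1 - t) - (1 - (s + t))‖ = ‖(s : F)‖ * ‖(t : F)‖ := by
          rw [← norm_mul]; ring_nf
      _ ≤ ε * ε :=
          mul_le_mul (hB _ s.2) (hB _ t.2) (norm_nonneg _) ((norm_nonneg _).trans (hB _ s.2))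
      _ ≤ δ := hεδ

namespace AddChar

variable {G R : Type*} [AddCommGroup G]

def liftQuotient [Monoid R] (H : AddSubgroup G) (ψ : AddChar G R) (hψ : ∀ x ∈ H, ψ x = 1) :
    AddChar (G ⧸ H) R :=
  toAddMonoidHomEquiv.symm <|
    QuotientAddGroup.lift H (toAddMonoidHomEquiv ψ) fun x hx => congrArg Additive.ofMul (hψ x hx)

lemma surjective_of_injective [Finite G] {Φ : G → AddChar G Circle} (hΦ : Function.Injective Φ) :
    Function.Surjective Φ := by
  have : Fintype G := Fintype.ofFinite G
  have hcoe : Function.Injective (Circle.coeHom.compAddChar : AddChar G Circle → AddChar G ℂ) :=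
    fun ψ ψ' h => DFunLike.ext _ _ fun x => Circle.coe_injective (DFunLike.congr_fun h x)
  have : Finite (AddChar G Circle) := Finite.of_injective _ hcoe
  refine (hΦ.bijective_of_nat_card_le ?_).2
  calc Nat.card (AddChar G Circle) ≤ Nat.card (AddChar G ℂ) :=
        Nat.card_le_card_of_injective _ hcoe
    _ ≤ Nat.card G := by simpa only [Nat.card_eq_fintype_card] using card_addChar_le G ℂ

end AddChar

lemma exists_norm_le_map_ne_one {F : Type*} [NormedField F] {q : ℝ} (hq : 1 < q)
    (hdisc : ∀ x : F, x ≠ 0 → ∃ k : ℤ, ‖x‖ = q ^ k) (ψ₀ : AddChar F Circle) {x₀ : F}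
    (hx₀q : ‖x₀‖ ≤ q) (hx₀ : ψ₀ x₀ ≠ 1) {n N : ℤ} {c d : F} (hc : ‖c‖ = q ^ (N + n))
    (hd : q ^ (-N) < ‖d‖) :
    ∃ t : F, ‖t‖ ≤ q ^ (-n) ∧ ψ₀ (c * d * t) ≠ 1 := by
  have hq0 : 0 < q := one_pos.trans hq
  have hd0 : d ≠ 0 := norm_pos_iff.mp ((zpow_pos hq0 _).trans hd)
  have hc0 : c ≠ 0 := norm_pos_iff.mp (hc ▸ zpow_pos hq0 _)
  obtain ⟨k, hk⟩ := hdisc d hd0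
  have hNk : -N < k := (zpow_lt_zpow_iff_right₀ hq).mp (hk ▸ hd)
  refine ⟨x₀ / (c * d), ?_, by rwa [mul_div_cancel₀ _ (mul_ne_zero hc0 hd0)]⟩
  rw [norm_div, norm_mul, hc, hk, ← zpow_add₀ hq0.ne', div_le_iff₀ (zpow_pos hq0 _),
    ← zpow_add₀ hq0.ne']
  calc ‖x₀‖ ≤ q ^ (1 : ℤ) := by simpa using hx₀q
    _ ≤ q ^ (-n + (N + n + k)) := zpow_le_zpow_right₀ hq.le (by omega)

theorem exists_eq_addChar_mul_of_trivial {F : Type*} [NormedField F] [IsUltrametricDist F]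
    [ProperSpace F] {q : ℝ} (hq : 1 < q) (hdisc : ∀ x : F, x ≠ 0 → ∃ k : ℤ, ‖x‖ = q ^ k)
    {π : F} (hπ : ‖π‖ = q⁻¹) (ψ₀ : AddChar F Circle) (hψtriv : ∀ x : F, ‖x‖ ≤ 1 → ψ₀ x = 1)
    {x₀ : F} (hx₀q : ‖x₀‖ ≤ q) (hx₀ : ψ₀ x₀ ≠ 1) {n N : ℤ} {B : AddSubgroup F}
    (hB : ∀ x, x ∈ B ↔ ‖x‖ ≤ q ^ (-n)) (η : AddChar B Circle)
    (hη : ∀ t : B, ‖(t : F)‖ ≤ q ^ (-N) → η t = 1) :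
    ∃ a : F, ‖a‖ ≤ q ^ N ∧ ∀ t : B, η t = ψ₀ (a * t) := by
  have hq0 : 0 < q := one_pos.trans hq
  let C : AddSubgroup B := ((closedBall_openAddSubgroup F (zpow_pos hq0 (-N))).comap
    B.subtype continuous_subtype_val).toAddSubgroup
  have hC (t : B) : t ∈ C ↔ ‖(t : F)‖ ≤ q ^ (-N) := mem_closedBall_zero_iff
  have : CompactSpace B := isCompact_iff_compactSpace.mp <| by
    convert isCompact_closedBall (0 : F) (q ^ (-n))
    ext
    simp [hB]
  set c : F := π ^ (-(N + n))
  have hc : ‖c‖ = q ^ (N + n) := by rw [norm_zpow, hπ, inv_zpow', neg_neg]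
  have hnorm_le_one (s t : B) (ht : t ∈ C) : ‖c * s * t‖ ≤ 1 := by
    rw [norm_mul, norm_mul, hc]
    calc q ^ (N + n) * ‖(s : F)‖ * ‖(t : F)‖ ≤ q ^ (N + n) * q ^ (-n) * q ^ (-N) := by
          gcongr
          exacts [(hB s).mp s.2, (hC t).mp ht]
      _ = 1 := by rw [← zpow_add₀ hq0.ne', ← zpow_add₀ hq0.ne']; simp
  let pairing (s : B) : AddChar (B ⧸ C) Circle := AddChar.liftQuotient C
    (ψ₀.compAddMonoidHom ((AddMonoidHom.mulLeft (c * s)).comp B.subtype))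
    fun t ht => hψtriv _ (hnorm_le_one s t ht)
  have hpairing (s t : B) : pairing s t = ψ₀ (c * s * t) := rfl
  have hinj : Function.Injective fun g : B ⧸ C => pairing g.out := by
    intro g g' h
    rw [← QuotientAddGroup.out_eq' g, ← QuotientAddGroup.out_eq' g',
      QuotientAddGroup.eq_iff_sub_mem, hC]
    by_contra! hd
    obtain ⟨t, ht, hψ⟩ := exists_norm_le_map_ne_one hq hdisc ψ₀ hx₀q hx₀ hc hd
    have h' := DFunLike.congr_fun h ((⟨t, (hB t).mpr ht⟩ : B) : B ⧸ C)
    rw [hpairing, hpairing] at h'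
    rw [AddSubgroup.coe_sub, mul_sub, sub_mul, AddChar.map_sub_eq_div, h', div_self'] at hψ
    exact hψ rfl
  obtain ⟨g, hg⟩ := AddChar.surjective_of_injective hinj
    (AddChar.liftQuotient C η fun t ht => hη t ((hC t).mp ht))
  refine ⟨c * g.out, ?_, fun t => ?_⟩
  · rw [norm_mul, hc]
    calc q ^ (N + n) * ‖((Quotient.out g : B) : F)‖ ≤ q ^ (N + n) * q ^ (-n) := by
          gcongr
          exact (hB _).mp (Quotient.out g).2
      _ = q ^ N := by rw [← zpow_add₀ hq0.ne']; simp
  · rw [← hpairing]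
    exact (DFunLike.congr_fun hg (t : B ⧸ C)).symm

theorem stmt_15_general (F : Type*) [NormedField F] [IsUltrametricDist F]
    [ProperSpace F]
    (q : ℝ) (hq : 1 < q)
    (hdisc : ∀ x : F, x ≠ 0 → ∃ k : ℤ, ‖x‖ = q ^ k)
    (hunif : ∃ π : F, ‖π‖ = q⁻¹)
    (ψ₀ : AddChar F Circle)
    (hψtriv : ∀ x : F, ‖x‖ ≤ 1 → ψ₀ x = 1)
    (hψnontriv : ∃ x : F, ‖x‖ ≤ q ∧ ψ₀ x ≠ 1)
    {n N : ℕ} (hn : 0 < n) (hN2 : N ≤ 2 * n)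
    (χ : Fˣ →* Circle)
    (hχ : ∀ u : Fˣ, ‖(u : F) - 1‖ ≤ q ^ (-(N : ℤ)) → χ u = 1) :
    ∃ a : F, ‖a‖ ≤ q ^ (N : ℤ) ∧
      ∀ m : ℕ, 1 ≤ m → ∀ v : Matrix (Fin m) (Fin m) F,
        (∀ i j, ‖v i j‖ ≤ q ^ (-(n : ℤ))) →
        ∀ u : Fˣ, (u : F) = (1 - v).det → χ u = ψ₀ (a * v.trace) := by
  obtain ⟨π, hπ⟩ := hunif
  obtain ⟨x₀, hx₀q, hx₀⟩ := hψnontriv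
  set ε : ℝ := q ^ (-(n : ℤ))
  have hε0 : 0 < ε := zpow_pos (one_pos.trans hq) _
  have hε1 : ε < 1 := zpow_lt_one_of_neg₀ hq (by omega)
  have hεδ : ε * ε ≤ q ^ (-(N : ℤ)) := by
    rw [← zpow_add₀ (one_pos.trans hq).ne']
    exact zpow_le_zpow_right₀ hq.le (by omega)
  let B := (closedBall_openAddSubgroup F hε0).toAddSubgroup
  have hB (x : F) : x ∈ B ↔ ‖x‖ ≤ ε := mem_closedBall_zero_iff
  obtain ⟨η, hη⟩ := exists_addChar_eq_of_norm_sub_le hε1 hεδ (fun x => (hB x).mp) χ hχ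
  obtain ⟨a, ha, hψ⟩ := exists_eq_addChar_mul_of_trivial (N := N) hq hdisc hπ ψ₀ hψtriv hx₀q hx₀
    hB η fun t ht => (hη t 1 (by simpa using ht)).trans (map_one χ)
  refine ⟨a, ha, fun m _ v hv u hu => ?_⟩
  have htr : v.trace ∈ B :=
    (hB _).mpr (norm_sum_le_of_forall_le_of_nonneg hε0.le fun i _ => hv i i)
  rw [← hψ ⟨_, htr⟩]
  refine (hη ⟨_, htr⟩ u ?_).symm
  rw [hu]
  exact (v.norm_det_one_sub_sub_one_sub_trace_le hε0.le hε1.le hv).trans hεδ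

/-- Let `F` be a non-archimedean local field of characteristic zero
(formalized via its ultrametric absolute value with value group `q^ℤ`, `q > 1`; membership
in `P_F^k`, `k ∈ ℤ`, means norm `≤ q^(-k)`; `‖v‖ = max |v i j|` for matrices).  Let
`n ≤ N ≤ 2n` be positive integers, `ψ₀` a continuous additive character of `F` trivial on
`O_F` and nontrivial on `P_F^(-1)`, and `χ` a character of `F^×` trivial on `1 + P_F^N`.
Then there is `a ∈ P_F^(-N)` with `χ(det(I_m − v)) = ψ₀(a·tr(v))` for every `m ≥ 1` and
every `v ∈ Mat_m(F)` with `‖v‖ ≤ q^(-n)`. -/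
theorem stmt_15 (F : Type*) [NormedField F] [IsUltrametricDist F]
    [CompleteSpace F] [CharZero F] [ProperSpace F]
    (q : ℝ) (hq : 1 < q)
    (hdisc : ∀ x : F, x ≠ 0 → ∃ k : ℤ, ‖x‖ = q ^ k)
    (hunif : ∃ π : F, ‖π‖ = q⁻¹)
    (ψ₀ : AddChar F Circle) (hψcont : Continuous ψ₀)
    (hψtriv : ∀ x : F, ‖x‖ ≤ 1 → ψ₀ x = 1)
    (hψnontriv : ∃ x : F, ‖x‖ ≤ q ∧ ψ₀ x ≠ 1)
    {n N : ℕ} (hn : 0 < n) (hnN : n ≤ N) (hN2 : N ≤ 2 * n)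
    (χ : Fˣ →* Circle)
    (hχ : ∀ u : Fˣ, ‖(u : F) - 1‖ ≤ q ^ (-(N : ℤ)) → χ u = 1) :
    ∃ a : F, ‖a‖ ≤ q ^ (N : ℤ) ∧
      ∀ m : ℕ, 1 ≤ m → ∀ v : Matrix (Fin m) (Fin m) F,
        (∀ i j, ‖v i j‖ ≤ q ^ (-(n : ℤ))) →
        ∀ u : Fˣ, (u : F) = (1 - v).det → χ u = ψ₀ (a * v.trace) :=
  stmt_15_general F q hq hdisc hunif ψ₀ hψtriv hψnontriv hn hN2 χ hχ
end

section
/- Let E/F be a quadratic extension of non-archimedean local fields of characteristic zero, with θ the nontrivial element of Gal(E/F), O_E the ring of integers of E, P_E its maximal ideal, residue field of cardinality q, and normalized valuation v_E. Let w_m be the m×m antidiagonal permutation matrix, and let T = diag(t_1, …, t_m) with each t_i ∈ F^× and |t_i|_E ∈ {1, q}. Let n be an integer with n > v_E(2). Then there is no x ∈ Mat_m(E) satisfying both (x·w_m)* = −(x·w_m) and x·w_m·T − I_m ∈ Mat_m(P_E^n); equivalently, no element X of the set {x·w_m·T : x ∈ Mat_m(E), (x·w_m)* = −(x·w_m)}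 satisfies X − I_m ∈ Mat_m(P_E^n). -/
open Matrix

/-- Let `E/F` be a quadratic extension of non-archimedean local fields of
characteristic zero, with `θ` the nontrivial element of `Gal(E/F)` (an involutive, isometric
ring automorphism of `E` whose fixed field is `F`; `t ∈ F^×` is expressed as `θ t = t`,
`t ≠ 0`).  `E` is formalized via its ultrametric absolute value with value group `q^ℤ`,
`q > 1`; membership in `P_E^n` means norm `≤ q^(-n)`, and `n > v_E(2)` means
`q^(-n) < ‖2‖`.  Let `w_m` be the antidiagonal permutation matrix and
`T = diag(t_1, …, t_m)` with `t_i ∈ F^×`, `|t_i|_E ∈ {1, q}`.  Then no `x ∈ Mat_m(E)`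
satisfies both `(x·w_m)* = −(x·w_m)` and `x·w_m·T − I_m ∈ Mat_m(P_E^n)`
(where `x* = (x.map θ)ᵀ`). -/
theorem stmt_18 (E : Type*) [NormedField E] [IsUltrametricDist E]
    [CompleteSpace E] [CharZero E] [ProperSpace E]
    (q : ℝ) (hq : 1 < q)
    (hdisc : ∀ x : E, x ≠ 0 → ∃ k : ℤ, ‖x‖ = q ^ k)
    (hunif : ∃ π : E, ‖π‖ = q⁻¹)
    (θ : E ≃+* E) (hθinv : Function.Involutive θ) (hθne : ⇑θ ≠ id)
    (hθiso : ∀ x : E, ‖θ x‖ = ‖x‖)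
    {m : ℕ} (hm : 0 < m)
    (w : Matrix (Fin m) (Fin m) E)
    (hw : w = Matrix.of fun i j => if j = i.rev then 1 else 0)
    (t : Fin m → E) (ht0 : ∀ i, t i ≠ 0) (htθ : ∀ i, θ (t i) = t i)
    (htabs : ∀ i, ‖t i‖ = 1 ∨ ‖t i‖ = q)
    (T : Matrix (Fin m) (Fin m) E) (hT : T = Matrix.diagonal t)
    (n : ℕ) (hn : q ^ (-(n : ℤ)) < ‖(2 : E)‖) :
    ¬ ∃ x : Matrix (Fin m) (Fin m) E,
        ((x * w).map θ)ᵀ = -(x * w) ∧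
        ∀ i j, ‖(x * w * T - 1) i j‖ ≤ q ^ (-(n : ℤ)) := by
  rintro ⟨x, hskew, hsmall⟩
  set y := x * w with hy
  set i : Fin m := ⟨0, hm⟩
  set a : E := y i i * t i with ha
  have hθa : θ a = -a := by
    have h1 : θ (y i i) = -(y i i) := by
      have := congrFun (congrFun hskew i) i
      simpa [Matrix.transpose_apply, Matrix.map_apply] using this
    simp [ha, _root_.map_mul, h1, htθ i, neg_mul]
  have hdiag : (y * T - 1) i i = a - 1 := by
    simp [hT, Matrix.mul_diagonal, ha]
  have h1 : ‖a - 1‖ ≤ q ^ (-(n : ℤ)) := by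
    have := hsmall i i
    rwa [hdiag] at this
  have h2 : ‖1 + a‖ = ‖a - 1‖ := by
    have : (1 + a : E) = θ (1 - a) := by rw [_root_.map_sub, _root_.map_one, hθa]; ring
    rw [this, hθiso, ← norm_neg]; ring_nf
  have h3 : ‖(2 : E)‖ ≤ q ^ (-(n : ℤ)) := by
    have h4 : (2 : E) = (1 - a) + (1 + a) := by ring
    calc ‖(2 : E)‖ = ‖(1 - a) + (1 + a)‖ := by rw [← h4]
      _ ≤ max ‖(1 - a)‖ ‖1 + a‖ := IsUltrametricDist.norm_add_le_max _ _
      _ ≤ q ^ (-(n : ℤ)) := by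
          rw [h2]
          have : ‖(1 - a : E)‖ = ‖a - 1‖ := by rw [← norm_neg]; ring_nf
          rw [this]; exact max_le h1 h1
  exact absurd h3 (not_le.mpr hn)
end
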